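/- Suppose x* is a least-squares solution of min ‖Ax − b‖₂², the distribution 𝒟 satisfies that 𝔼[SSᵀ] is positive definite, and {x^k} is generated by the RCGLS algorithm. Then 𝔼[‖x^{k+1} − x*‖²_{AᵀA} | x^k] ≤ (1 − γ_k σ²_min(AM^{1/2})) ‖x^k − x*‖²_{AᵀA}, where γ_k ≥ 1 is defined by the AᵀA-angle between the sketched gradient and the previous direction, and M = 𝔼[SSᵀ/‖AS‖₂²]. -/

import Mathlib

open Matrix

/-- Squared spectral (ℓ2 operator) norm of a real matrix. -/
noncomputable def opNormSq {a b : ℕ} (B : Matrix (Fin a) (Fin b) ℝ) : ℝ :=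
  sSup {t : ℝ | ∃ v : Fin b → ℝ, v ⬝ᵥ v = 1 ∧ t = B.mulVec v ⬝ᵥ B.mulVec v}

/-- Squared smallest nonzero singular value of a real matrix. -/
noncomputable def sigmaMinSq {a b : ℕ} (B : Matrix (Fin a) (Fin b) ℝ) : ℝ :=
  sInf {t : ℝ | ∃ v : Fin b → ℝ, (∃ u : Fin a → ℝ, Bᵀ.mulVec u = v) ∧
    v ⬝ᵥ v = 1 ∧ t = B.mulVec v ⬝ᵥ B.mulVec v}

/-- The square root `U √D Uᵀ` read off the spectral decomposition `A = U D Uᵀ`. -/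
noncomputable def Matrix.PosSemidef.sqrt {n : Type*} [Fintype n] [DecidableEq n]
    {A : Matrix n n ℝ} (hA : A.PosSemidef) : Matrix n n ℝ :=
  hA.1.eigenvectorUnitary.1 * diagonal ((↑) ∘ (√·) ∘ hA.1.eigenvalues) *
    (star hA.1.eigenvectorUnitary : Matrix n n ℝ)

/-!
Write `e = A (x^k - x*)`. The normal equations give `Aᵀ r^k = -Aᵀ e`, so for every sketch
`ω := ‖S_kᵀ Aᵀ r^k‖² = -⟪e, a⟫` with `a = A S_k S_kᵀ Aᵀ r^k`. Since `⟪e, A p^{k-1}⟫ = 0`, the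
conjugated direction `v = A p^k = a + τ A p^{k-1}` still has `⟪e, v⟫ = -ω`, and `μ_k` is the exact
line search along it, so `‖e + μ_k v‖² = ‖e‖² - ω² / ‖v‖²`. Now `‖v‖² = ‖a‖² sin² ∠(a, A p^{k-1})
≤ ‖a‖² / γ_k` and `‖a‖² ≤ ‖A S_k‖² ω`, so each sketch removes at least `γ_k ω / ‖A S_k‖²`.
Averaging over sketches, the removed amount is `γ_k ⟪Aᵀe, M Aᵀe⟫ = γ_k ‖(A M^{1/2})ᵀ e‖²`.
Finally `𝔼[S Sᵀ] ≻ 0` forces `e` into the range of `(A M^{1/2}) (A M^{1/2})ᵀ`, on which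
`‖(A M^{1/2})ᵀ e‖² ≥ σ²_min(A M^{1/2}) ‖e‖²`.
-/

section DotProduct

variable {m : Type*} [Fintype m]

lemma dotProduct_self_nonneg (v : m → ℝ) : 0 ≤ v ⬝ᵥ v := by
  simpa using dotProduct_star_self_nonneg v

lemma dotProduct_sq_le (u v : m → ℝ) : (u ⬝ᵥ v) ^ 2 ≤ (u ⬝ᵥ u) * (v ⬝ᵥ v) := by
  simpa only [dotProduct, pow_two] using Finset.sum_mul_sq_le_sq_mul_sq Finset.univ u v

lemma smul_dotProduct_smul_self (c : ℝ) (v : m → ℝ) :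
    c • v ⬝ᵥ c • v = c ^ 2 * (v ⬝ᵥ v) := by
  rw [smul_dotProduct, dotProduct_smul, smul_eq_mul, smul_eq_mul]; ring

lemma exists_sq_mul_dotProduct_self_eq_one {v : m → ℝ} (hv : v ≠ 0) :
    ∃ c : ℝ, c ^ 2 * (v ⬝ᵥ v) = 1 := by
  have hpos : 0 < v ⬝ᵥ v :=
    (dotProduct_self_nonneg v).lt_of_ne' (dotProduct_self_eq_zero.not.mpr hv)
  exact ⟨(√(v ⬝ᵥ v))⁻¹, by rw [inv_pow, Real.sq_sqrt hpos.le, inv_mul_cancel₀ hpos.ne']⟩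

/-- `1 - cos²` of the angle between `u` and `v`; the `γ_k` of RCGLS is the infimum over sketches
of `(sinSqAngle (A S_k S_kᵀ Aᵀ r^k) (A p^{k-1}))⁻¹`. -/
noncomputable def sinSqAngle (u v : m → ℝ) : ℝ :=
  1 - (u ⬝ᵥ v) ^ 2 / ((u ⬝ᵥ u) * (v ⬝ᵥ v))

lemma sinSqAngle_nonneg (u v : m → ℝ) : 0 ≤ sinSqAngle u v := by
  rw [sinSqAngle, sub_nonneg]
  exact div_le_one_of_le₀ (dotProduct_sq_le u v)
    (mul_nonneg (dotProduct_self_nonneg u) (dotProduct_self_nonneg v))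

lemma dotProduct_self_sub_proj (u v : m → ℝ) :
    (u + (-(u ⬝ᵥ v) / (v ⬝ᵥ v)) • v) ⬝ᵥ (u + (-(u ⬝ᵥ v) / (v ⬝ᵥ v)) • v) =
      (u ⬝ᵥ u) * sinSqAngle u v := by
  rcases eq_or_ne v 0 with rfl | hv
  · simp [sinSqAngle]
  rcases eq_or_ne u 0 with rfl | hu
  · simp [sinSqAngle]
  have hvv : v ⬝ᵥ v ≠ 0 := dotProduct_self_eq_zero.not.mpr hv
  have huu : u ⬝ᵥ u ≠ 0 := dotProduct_self_eq_zero.not.mpr hu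
  simp only [sinSqAngle, add_dotProduct, dotProduct_add, smul_dotProduct, dotProduct_smul,
    smul_eq_mul, dotProduct_comm v u]
  field_simp
  ring

lemma dotProduct_self_add_div_smul (e v : m → ℝ) (ω : ℝ) (hev : e ⬝ᵥ v = -ω) :
    (e + (ω / (v ⬝ᵥ v)) • v) ⬝ᵥ (e + (ω / (v ⬝ᵥ v)) • v) = e ⬝ᵥ e - ω ^ 2 / (v ⬝ᵥ v) := by
  rcases eq_or_ne v 0 with rfl | hv
  · simp
  have hvv : v ⬝ᵥ v ≠ 0 := dotProduct_self_eq_zero.not.mpr hv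
  simp only [add_dotProduct, dotProduct_add, smul_dotProduct, dotProduct_smul, smul_eq_mul,
    dotProduct_comm v e, hev]
  field_simp
  ring

lemma conjugate_step_le (e a p : m → ℝ) {ω L γ : ℝ} (hep : e ⬝ᵥ p = 0) (hea : e ⬝ᵥ a = -ω)
    (hL : a ⬝ᵥ a ≤ L * ω) (hγ₀ : 0 ≤ γ) (hγ : γ ≤ (sinSqAngle a p)⁻¹) :
    let v := a + (-(a ⬝ᵥ p) / (p ⬝ᵥ p)) • p
    (e + (ω / (v ⬝ᵥ v)) • v) ⬝ᵥ (e + (ω / (v ⬝ᵥ v)) • v) ≤ e ⬝ᵥ e - γ * (ω / L) := by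
  intro v
  have hev : e ⬝ᵥ v = -ω := by
    simp only [v, dotProduct_add, dotProduct_smul, hep, hea, smul_zero, add_zero]
  rw [dotProduct_self_add_div_smul e v ω hev, dotProduct_self_sub_proj, sub_le_sub_iff_left]
  rcases eq_or_ne ω 0 with rfl | hω
  · simp
  have hQ : 0 < a ⬝ᵥ a := by
    refine (dotProduct_self_nonneg a).lt_of_ne' (dotProduct_self_eq_zero.not.mpr ?_)
    rintro rfl
    simp [eq_comm, hω] at hea
  have hω_div : ω / L ≤ ω ^ 2 / (a ⬝ᵥ a) := by
    calc ω / L = ω ^ 2 / (L * ω) := by field_simp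
      _ ≤ ω ^ 2 / (a ⬝ᵥ a) := div_le_div_of_nonneg_left (sq_nonneg ω) hQ hL
  calc γ * (ω / L) ≤ γ * (ω ^ 2 / (a ⬝ᵥ a)) := mul_le_mul_of_nonneg_left hω_div hγ₀
    _ ≤ (sinSqAngle a p)⁻¹ * (ω ^ 2 / (a ⬝ᵥ a)) := by gcongr
    _ = ω ^ 2 / ((a ⬝ᵥ a) * sinSqAngle a p) := by ring

end DotProduct

section Norms

variable {a b : ℕ}

lemma mulVec_dotProduct_self_le (B : Matrix (Fin a) (Fin b) ℝ) (v : Fin b → ℝ) :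
    B *ᵥ v ⬝ᵥ B *ᵥ v ≤ (∑ i, B i ⬝ᵥ B i) * (v ⬝ᵥ v) := by
  rw [Finset.sum_mul]
  refine Finset.sum_le_sum fun i _ => ?_
  exact (pow_two (B i ⬝ᵥ v)).symm.trans_le (dotProduct_sq_le (B i) v)

lemma opNormSq_bddAbove (B : Matrix (Fin a) (Fin b) ℝ) :
    BddAbove {t : ℝ | ∃ v : Fin b → ℝ, v ⬝ᵥ v = 1 ∧ t = B *ᵥ v ⬝ᵥ B *ᵥ v} := by
  refine ⟨∑ i, B i ⬝ᵥ B i, ?_⟩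
  rintro t ⟨v, hv, rfl⟩
  simpa [hv] using mulVec_dotProduct_self_le B v

lemma opNormSq_nonneg (B : Matrix (Fin a) (Fin b) ℝ) : 0 ≤ opNormSq B :=
  Real.sSup_nonneg fun _ ⟨_, _, ht⟩ => ht ▸ dotProduct_self_nonneg _

lemma mulVec_dotProduct_self_le_opNormSq (B : Matrix (Fin a) (Fin b) ℝ) (v : Fin b → ℝ) :
    B *ᵥ v ⬝ᵥ B *ᵥ v ≤ opNormSq B * (v ⬝ᵥ v) := by
  rcases eq_or_ne v 0 with rfl | hv
  · simp
  obtain ⟨c, hc⟩ := exists_sq_mul_dotProduct_self_eq_one hv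
  have hle : c ^ 2 * (B *ᵥ v ⬝ᵥ B *ᵥ v) ≤ opNormSq B := by
    refine le_csSup (opNormSq_bddAbove B) ⟨c • v, ?_, ?_⟩
    · rwa [smul_dotProduct_smul_self]
    · rw [mulVec_smul, smul_dotProduct_smul_self]
  calc B *ᵥ v ⬝ᵥ B *ᵥ v = c ^ 2 * (B *ᵥ v ⬝ᵥ B *ᵥ v) * (v ⬝ᵥ v) := by
        rw [mul_right_comm, hc, one_mul]
    _ ≤ opNormSq B * (v ⬝ᵥ v) := by gcongr; exact dotProduct_self_nonneg v

lemma eq_zero_of_opNormSq_eq_zero {B : Matrix (Fin a) (Fin b) ℝ} (hB : opNormSq B = 0) :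
    B = 0 := by
  refine Matrix.toLin'.injective (LinearMap.ext fun v => ?_)
  have := mulVec_dotProduct_self_le_opNormSq B v
  rw [hB, zero_mul] at this
  simpa using le_antisymm this (dotProduct_self_nonneg _)

lemma sigmaMinSq_mul_dotProduct_self_le (B : Matrix (Fin a) (Fin b) ℝ) (x : Fin a → ℝ) :
    sigmaMinSq B * (Bᵀ *ᵥ x ⬝ᵥ Bᵀ *ᵥ x) ≤ B *ᵥ (Bᵀ *ᵥ x) ⬝ᵥ B *ᵥ (Bᵀ *ᵥ x) := by
  set v := Bᵀ *ᵥ x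
  rcases eq_or_ne v 0 with hv | hv
  · simp [hv]
  obtain ⟨c, hc⟩ := exists_sq_mul_dotProduct_self_eq_one hv
  have hle : sigmaMinSq B ≤ c ^ 2 * (B *ᵥ v ⬝ᵥ B *ᵥ v) := by
    refine csInf_le ⟨0, fun _ ⟨_, _, _, ht⟩ => ht ▸ dotProduct_self_nonneg _⟩
      ⟨c • v, ⟨c • x, mulVec_smul _ _ _⟩, ?_, ?_⟩
    · rwa [smul_dotProduct_smul_self]
    · rw [mulVec_smul, smul_dotProduct_smul_self]
  calc sigmaMinSq B * (v ⬝ᵥ v) ≤ c ^ 2 * (B *ᵥ v ⬝ᵥ B *ᵥ v) * (v ⬝ᵥ v) := by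
        gcongr; exact dotProduct_self_nonneg v
    _ = B *ᵥ v ⬝ᵥ B *ᵥ v := by rw [mul_right_comm, hc, one_mul]

/-- `u = B v` with `v = Bᵀ x ∈ range Bᵀ`: the infimum defining `σ²_min` bounds `‖B v‖² / ‖v‖²`, and
Cauchy–Schwarz on `‖u‖² = ⟪Bᵀ u, v⟫` transfers this to `u`. -/
lemma sigmaMinSq_mul_le_of_eq_mulVec (B : Matrix (Fin a) (Fin b) ℝ) (x : Fin a → ℝ) :
    let u := (B * Bᵀ) *ᵥ x
    sigmaMinSq B * (u ⬝ᵥ u) ≤ Bᵀ *ᵥ u ⬝ᵥ Bᵀ *ᵥ u := by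
  intro u
  set v := Bᵀ *ᵥ x
  have hu : u = B *ᵥ v := (mulVec_mulVec x B Bᵀ).symm
  have hσ := sigmaMinSq_mul_dotProduct_self_le B x
  rw [← hu] at hσ
  have hCS : (u ⬝ᵥ u) ^ 2 ≤ (Bᵀ *ᵥ u ⬝ᵥ Bᵀ *ᵥ u) * (v ⬝ᵥ v) := by
    have : u ⬝ᵥ u = Bᵀ *ᵥ u ⬝ᵥ v := by
      rw [dotProduct_comm (Bᵀ *ᵥ u), Matrix.dotProduct_transpose_mulVec B v u, ← hu]
    rw [this]
    exact dotProduct_sq_le _ _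
  rcases eq_or_ne v 0 with hv | hv
  · simp [hu, hv]
  have hvv : 0 < v ⬝ᵥ v :=
    (dotProduct_self_nonneg v).lt_of_ne' (dotProduct_self_eq_zero.not.mpr hv)
  refine le_of_mul_le_mul_right ?_ hvv
  nlinarith [dotProduct_self_nonneg u]

end Norms

lemma rcgls_step_le {n d q : ℕ} (A : Matrix (Fin n) (Fin d) ℝ) (b : Fin n → ℝ)
    {xstar : Fin d → ℝ} (hstar : Aᵀ *ᵥ (A *ᵥ xstar) = Aᵀ *ᵥ b) (S : Matrix (Fin d) (Fin q) ℝ)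
    {x p : Fin d → ℝ}
    (horth : A *ᵥ (x - xstar) ⬝ᵥ A *ᵥ p = 0) {γ : ℝ} (hγ₀ : 0 ≤ γ) :
    let w := Sᵀ *ᵥ (Aᵀ *ᵥ (b - A *ᵥ x))
    let τ := -(A *ᵥ (S *ᵥ w) ⬝ᵥ A *ᵥ p) / (A *ᵥ p ⬝ᵥ A *ᵥ p)
    let pk := S *ᵥ w + τ • p
    let μ := w ⬝ᵥ w / (A *ᵥ pk ⬝ᵥ A *ᵥ pk)
    γ ≤ (sinSqAngle (A *ᵥ (S *ᵥ w)) (A *ᵥ p))⁻¹ →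
    A *ᵥ (x + μ • pk - xstar) ⬝ᵥ A *ᵥ (x + μ • pk - xstar) ≤
      A *ᵥ (x - xstar) ⬝ᵥ A *ᵥ (x - xstar) - γ * (w ⬝ᵥ w / opNormSq (A * S)) := by
  intro w τ pk μ hγ
  set e := A *ᵥ (x - xstar)
  have hgrad : Aᵀ *ᵥ e = -(Aᵀ *ᵥ (b - A *ᵥ x)) := by
    simp only [e, mulVec_sub, hstar, neg_sub]
  have hea : e ⬝ᵥ A *ᵥ (S *ᵥ w) = -(w ⬝ᵥ w) := by
    rw [← Matrix.dotProduct_transpose_mulVec A (S *ᵥ w) e, hgrad, dotProduct_neg, dotProduct_comm,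
      ← Matrix.dotProduct_transpose_mulVec S w]
  have hL : A *ᵥ (S *ᵥ w) ⬝ᵥ A *ᵥ (S *ᵥ w) ≤ opNormSq (A * S) * (w ⬝ᵥ w) := by
    rw [mulVec_mulVec]
    exact mulVec_dotProduct_self_le_opNormSq _ _
  have hnext : A *ᵥ (x + μ • pk - xstar) = e + μ • (A *ᵥ (S *ᵥ w) + τ • A *ᵥ p) := by
    simp only [pk, e, mulVec_add, mulVec_sub, mulVec_smul]
    abel
  have hμ : μ = w ⬝ᵥ w / ((A *ᵥ (S *ᵥ w) + τ • A *ᵥ p) ⬝ᵥ (A *ᵥ (S *ᵥ w) + τ • A *ᵥ p)) := by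
    simp only [μ, pk, mulVec_add, mulVec_smul]
  rw [hnext, hμ]
  exact conjugate_step_le e _ _ horth hea hL hγ₀ hγ

namespace Matrix.PosSemidef

variable {n : Type*} [Fintype n] [DecidableEq n] {A : Matrix n n ℝ}

lemma transpose_sqrt (hA : A.PosSemidef) : hA.sqrtᵀ = hA.sqrt := by
  rw [Matrix.PosSemidef.sqrt, star_eq_conjTranspose, conjTranspose_eq_transpose_of_trivial,
    transpose_mul, transpose_mul, diagonal_transpose, transpose_transpose, Matrix.mul_assoc]

lemma sqrt_mul_self (hA : A.PosSemidef) : hA.sqrt * hA.sqrt = A := by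
  set U : Matrix n n ℝ := hA.1.eigenvectorUnitary.1
  set D := diagonal ((↑) ∘ (√·) ∘ hA.1.eigenvalues : n → ℝ)
  have hU : (star hA.1.eigenvectorUnitary : Matrix n n ℝ) * U = 1 :=
    Unitary.coe_star_mul_self _
  have hD : D * D = diagonal ((↑) ∘ hA.1.eigenvalues : n → ℝ) := by
    simp [D, diagonal_mul_diagonal, Real.mul_self_sqrt (hA.eigenvalues_nonneg _)]
  calc hA.sqrt * hA.sqrt
      = U * (D * ((star hA.1.eigenvectorUnitary : Matrix n n ℝ) * U) * D) *
          (star hA.1.eigenvectorUnitary : Matrix n n ℝ) := by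
        simp only [Matrix.PosSemidef.sqrt, U, D, Matrix.mul_assoc]
    _ = A := by
      rw [hU, Matrix.mul_one, hD]
      conv_rhs => rw [hA.1.spectral_theorem]
      rfl

lemma dotProduct_mulVec_eq_sqrt (hA : A.PosSemidef) (z : n → ℝ) :
    z ⬝ᵥ A *ᵥ z = hA.sqrt *ᵥ z ⬝ᵥ hA.sqrt *ᵥ z := by
  conv_lhs => rw [← hA.sqrt_mul_self, ← mulVec_mulVec]
  rw [← Matrix.dotProduct_transpose_mulVec, hA.transpose_sqrt, dotProduct_comm]

end Matrix.PosSemidef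

lemma exists_mulVec_eq_of_forall_dotProduct_eq_zero {n : Type*} [Fintype n] [DecidableEq n]
    {G : Matrix n n ℝ} (hG : Gᵀ = G) {u : n → ℝ}
    (hu : ∀ y, G *ᵥ y = 0 → u ⬝ᵥ y = 0) : ∃ x, G *ᵥ x = u := by
  set T : EuclideanSpace ℝ n →ₗ[ℝ] EuclideanSpace ℝ n := Matrix.toLpLin 2 2 G
  have hT : T.IsSymmetric := fun x y => by
    simp only [T, Matrix.toLpLin_apply, EuclideanSpace.inner_eq_star_dotProduct, star_trivial]
    rw [dotProduct_mulVec, ← mulVec_transpose, hG]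
  have hrange : LinearMap.range T = (LinearMap.ker T)ᗮ := by
    rw [← hT.orthogonal_range, Submodule.orthogonal_orthogonal]
  have hmem : WithLp.toLp 2 u ∈ LinearMap.range T := by
    rw [hrange, Submodule.mem_orthogonal]
    intro y hy
    simpa [EuclideanSpace.inner_eq_star_dotProduct, dotProduct_comm] using
      hu y.ofLp (by simpa [T, Matrix.toLpLin_apply] using congrArg WithLp.ofLp hy)
  obtain ⟨x, hx⟩ := hmem
  exact ⟨x.ofLp, by simpa [T, Matrix.toLpLin_apply] using congrArg WithLp.ofLp hx⟩

section Sketch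

variable {ι : Type*} [Fintype ι] {n d q : ℕ}

lemma dotProduct_sum_smul_mul_transpose_mulVec {m r : Type*} [Fintype m] [Fintype r]
    (c : ι → ℝ) (S : ι → Matrix m r ℝ) (z : m → ℝ) :
    z ⬝ᵥ (∑ i, c i • (S i * (S i)ᵀ)) *ᵥ z = ∑ i, c i * ((S i)ᵀ *ᵥ z ⬝ᵥ (S i)ᵀ *ᵥ z) := by
  rw [sum_mulVec, dotProduct_sum]
  refine Finset.sum_congr rfl fun i _ => ?_
  rw [smul_mulVec, dotProduct_smul, smul_eq_mul, ← mulVec_mulVec, dotProduct_mulVec,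
    ← mulVec_transpose]

variable (A : Matrix (Fin n) (Fin d) ℝ) {prob : ι → ℝ} {S : ι → Matrix (Fin d) (Fin q) ℝ}
  (hM : (∑ i, (prob i / opNormSq (A * S i)) • (S i * (S i)ᵀ)).PosSemidef)

lemma transpose_mulVec_eq_zero_of_mul_sqrt (hprob : ∀ i, 0 ≤ prob i)
    (hE : (∑ i, prob i • (S i * (S i)ᵀ)).PosDef)
    {y : Fin n → ℝ} (hy : (A * hM.sqrt)ᵀ *ᵥ y = 0) : Aᵀ *ᵥ y = 0 := by
  set z := Aᵀ *ᵥ y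
  have hMz : z ⬝ᵥ (∑ i, (prob i / opNormSq (A * S i)) • (S i * (S i)ᵀ)) *ᵥ z = 0 := by
    rw [hM.dotProduct_mulVec_eq_sqrt, mulVec_mulVec, ← hM.transpose_sqrt, ← transpose_mul, hy,
      dotProduct_zero]
  rw [dotProduct_sum_smul_mul_transpose_mulVec] at hMz
  have hterm : ∀ i, prob i * ((S i)ᵀ *ᵥ z ⬝ᵥ (S i)ᵀ *ᵥ z) = 0 := by
    intro i
    -- the weight `prob i / opNormSq (A * S i)` is a junk `0` exactly when `A * S i = 0`
    rcases eq_or_ne (opNormSq (A * S i)) 0 with hL | hL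
    · have : (S i)ᵀ *ᵥ z = 0 := by
        rw [mulVec_mulVec, ← transpose_mul, eq_zero_of_opNormSq_eq_zero hL, transpose_zero,
          zero_mulVec]
      rw [this, dotProduct_zero, mul_zero]
    · have hi := (Finset.sum_eq_zero_iff_of_nonneg fun j _ => mul_nonneg
        (div_nonneg (hprob j) (opNormSq_nonneg _)) (dotProduct_self_nonneg _)).mp hMz i
        (Finset.mem_univ i)
      rwa [div_mul_eq_mul_div, div_eq_zero_iff, or_iff_left hL] at hi
  by_contra hz
  have hpos := hE.dotProduct_mulVec_pos hz
  rw [star_trivial, dotProduct_sum_smul_mul_transpose_mulVec, Finset.sum_eq_zero fun i _ => hterm i]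
    at hpos
  exact lt_irrefl 0 hpos

lemma exists_mul_sqrt_mul_transpose_mulVec_eq (hprob : ∀ i, 0 ≤ prob i)
    (hE : (∑ i, prob i • (S i * (S i)ᵀ)).PosDef) (x : Fin d → ℝ) :
    ∃ x₀, ((A * hM.sqrt) * (A * hM.sqrt)ᵀ) *ᵥ x₀ = A *ᵥ x := by
  refine exists_mulVec_eq_of_forall_dotProduct_eq_zero
    (by rw [transpose_mul, transpose_transpose]) fun y hy => ?_
  rw [← conjTranspose_eq_transpose_of_trivial, self_mul_conjTranspose_mulVec_eq_zero,
    conjTranspose_eq_transpose_of_trivial] at hy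
  rw [dotProduct_comm, ← Matrix.dotProduct_transpose_mulVec,
    transpose_mulVec_eq_zero_of_mul_sqrt A hM hprob hE hy, dotProduct_zero]

lemma sigmaMinSq_mul_sqrt_mul_le (hprob : ∀ i, 0 ≤ prob i)
    (hE : (∑ i, prob i • (S i * (S i)ᵀ)).PosDef) (x : Fin d → ℝ) :
    sigmaMinSq (A * hM.sqrt) * (A *ᵥ x ⬝ᵥ A *ᵥ x) ≤
      (A * hM.sqrt)ᵀ *ᵥ (A *ᵥ x) ⬝ᵥ (A * hM.sqrt)ᵀ *ᵥ (A *ᵥ x) := by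
  obtain ⟨x₀, hx₀⟩ := exists_mul_sqrt_mul_transpose_mulVec_eq A hM hprob hE x
  simpa only [hx₀] using sigmaMinSq_mul_le_of_eq_mulVec (A * hM.sqrt) x₀

lemma sum_mul_div_opNormSq_eq (u : Fin n → ℝ) :
    ∑ i, prob i * ((S i)ᵀ *ᵥ (Aᵀ *ᵥ u) ⬝ᵥ (S i)ᵀ *ᵥ (Aᵀ *ᵥ u) / opNormSq (A * S i)) =
      (A * hM.sqrt)ᵀ *ᵥ u ⬝ᵥ (A * hM.sqrt)ᵀ *ᵥ u := by
  rw [transpose_mul, hM.transpose_sqrt, ← mulVec_mulVec, ← hM.dotProduct_mulVec_eq_sqrt,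
    dotProduct_sum_smul_mul_transpose_mulVec]
  exact Finset.sum_congr rfl fun i _ => by ring

end Sketch

theorem stmt12_general {n d q : ℕ} {ι : Type*} [Fintype ι]
    (A : Matrix (Fin n) (Fin d) ℝ) (b : Fin n → ℝ)
    (xstar : Fin d → ℝ) (hstar : Aᵀ.mulVec (A.mulVec xstar) = Aᵀ.mulVec b)
    (prob : ι → ℝ) (hprob : ∀ i, 0 ≤ prob i) (hsum : ∑ i, prob i = 1)
    (S : ι → Matrix (Fin d) (Fin q) ℝ)
    (hE : (∑ i, prob i • (S i * (S i)ᵀ)).PosDef)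
    (hMpsd : (∑ i, (prob i / opNormSq (A * S i)) • (S i * (S i)ᵀ)).PosSemidef)
    (xk pkm1 : Fin d → ℝ)
    (horth : A.mulVec (xk - xstar) ⬝ᵥ A.mulVec pkm1 = 0) :
    let rk := b - A.mulVec xk
    let w : ι → (Fin q → ℝ) := fun i => (S i)ᵀ.mulVec (Aᵀ.mulVec rk)
    let τ : ι → ℝ := fun i =>
      -(A.mulVec ((S i).mulVec (w i)) ⬝ᵥ A.mulVec pkm1) /
        (A.mulVec pkm1 ⬝ᵥ A.mulVec pkm1)
    let pk : ι → (Fin d → ℝ) := fun i => (S i).mulVec (w i) + τ i • pkm1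
    let μ : ι → ℝ := fun i => (w i ⬝ᵥ w i) / (A.mulVec (pk i) ⬝ᵥ A.mulVec (pk i))
    let xnext : ι → (Fin d → ℝ) := fun i => xk + μ i • pk i
    let γk : ℝ := sInf (Set.range fun i : ι =>
      (1 - (A.mulVec ((S i).mulVec (w i)) ⬝ᵥ A.mulVec pkm1) ^ 2 /
          ((A.mulVec ((S i).mulVec (w i)) ⬝ᵥ A.mulVec ((S i).mulVec (w i))) *
            (A.mulVec pkm1 ⬝ᵥ A.mulVec pkm1)))⁻¹)
    ∑ i, prob i * (A.mulVec (xnext i - xstar) ⬝ᵥ A.mulVec (xnext i - xstar)) ≤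
      (1 - γk * sigmaMinSq (A * hMpsd.sqrt)) *
        (A.mulVec (xk - xstar) ⬝ᵥ A.mulVec (xk - xstar)) := by
  intro rk w τ pk μ xnext γk
  have hangle : ∀ i, 0 ≤ (sinSqAngle (A *ᵥ (S i *ᵥ w i)) (A *ᵥ pkm1))⁻¹ := fun i =>
    inv_nonneg.2 (sinSqAngle_nonneg _ _)
  have hγ₀ : 0 ≤ γk := Real.sInf_nonneg (by rintro _ ⟨i, rfl⟩; exact hangle i)
  have hstep (i : ι) := rcgls_step_le A b hstar (S i) horth hγ₀
    (csInf_le ⟨0, by rintro _ ⟨j, rfl⟩; exact hangle j⟩ ⟨i, rfl⟩)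
  have hσ := sigmaMinSq_mul_sqrt_mul_le A hMpsd hprob hE (xk - xstar)
  set e := A *ᵥ (xk - xstar)
  have hgrad : Aᵀ *ᵥ rk = -(Aᵀ *ᵥ e) := by
    simp only [rk, e, mulVec_sub, hstar, neg_sub]
  calc ∑ i, prob i * (A *ᵥ (xnext i - xstar) ⬝ᵥ A *ᵥ (xnext i - xstar))
      ≤ ∑ i, prob i * (e ⬝ᵥ e - γk * (w i ⬝ᵥ w i / opNormSq (A * S i))) :=
        Finset.sum_le_sum fun i _ => mul_le_mul_of_nonneg_left (hstep i) (hprob i)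
    _ = e ⬝ᵥ e - γk * ∑ i, prob i * (w i ⬝ᵥ w i / opNormSq (A * S i)) := by
        simp only [mul_sub, Finset.sum_sub_distrib, ← Finset.sum_mul, hsum, one_mul,
          Finset.mul_sum, mul_left_comm]
    _ = e ⬝ᵥ e - γk * ((A * hMpsd.sqrt)ᵀ *ᵥ e ⬝ᵥ (A * hMpsd.sqrt)ᵀ *ᵥ e) := by
        simp only [w, hgrad, mulVec_neg, neg_dotProduct_neg, sum_mul_div_opNormSq_eq A hMpsd]
    _ ≤ (1 - γk * sigmaMinSq (A * hMpsd.sqrt)) * (e ⬝ᵥ e) := by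
        nlinarith [mul_le_mul_of_nonneg_left hσ hγ₀]

/-- One-step expected contraction of RCGLS (Theorem 2.2):
`𝔼[‖x^{k+1}−x*‖²_{AᵀA} | x^k] ≤ (1 − γ_k σ²_min(A M^{1/2})) ‖x^k−x*‖²_{AᵀA}`,
where the conditional expectation is taken over the sketch `S_k` of a discrete
distribution, `γ_k` is the infimum over sketches of the inverse `AᵀA`-angle
factor between the sketched gradient and the previous direction, and
`M = 𝔼[SSᵀ/‖AS‖₂²]`. -/
theorem stmt12 {n d q : ℕ} {ι : Type*} [Fintype ι] [Nonempty ι]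
    (A : Matrix (Fin n) (Fin d) ℝ) (b : Fin n → ℝ)
    (xstar : Fin d → ℝ) (hstar : Aᵀ.mulVec (A.mulVec xstar) = Aᵀ.mulVec b)
    (prob : ι → ℝ) (hprob : ∀ i, 0 ≤ prob i) (hsum : ∑ i, prob i = 1)
    (S : ι → Matrix (Fin d) (Fin q) ℝ)
    (hE : (∑ i, prob i • (S i * (S i)ᵀ)).PosDef)
    (hMpsd : (∑ i, (prob i / opNormSq (A * S i)) • (S i * (S i)ᵀ)).PosSemidef)
    (xk pkm1 : Fin d → ℝ)
    (horth : A.mulVec (xk - xstar) ⬝ᵥ A.mulVec pkm1 = 0) :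
    let rk := b - A.mulVec xk
    let w : ι → (Fin q → ℝ) := fun i => (S i)ᵀ.mulVec (Aᵀ.mulVec rk)
    let τ : ι → ℝ := fun i =>
      -(A.mulVec ((S i).mulVec (w i)) ⬝ᵥ A.mulVec pkm1) /
        (A.mulVec pkm1 ⬝ᵥ A.mulVec pkm1)
    let pk : ι → (Fin d → ℝ) := fun i => (S i).mulVec (w i) + τ i • pkm1
    let μ : ι → ℝ := fun i => (w i ⬝ᵥ w i) / (A.mulVec (pk i) ⬝ᵥ A.mulVec (pk i))
    let xnext : ι → (Fin d → ℝ) := fun i => xk + μ i • pk i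
    let γk : ℝ := sInf (Set.range fun i : ι =>
      (1 - (A.mulVec ((S i).mulVec (w i)) ⬝ᵥ A.mulVec pkm1) ^ 2 /
          ((A.mulVec ((S i).mulVec (w i)) ⬝ᵥ A.mulVec ((S i).mulVec (w i))) *
            (A.mulVec pkm1 ⬝ᵥ A.mulVec pkm1)))⁻¹)
    ∑ i, prob i * (A.mulVec (xnext i - xstar) ⬝ᵥ A.mulVec (xnext i - xstar)) ≤
      (1 - γk * sigmaMinSq (A * hMpsd.sqrt)) *
        (A.mulVec (xk - xstar) ⬝ᵥ A.mulVec (xk - xstar)) :=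
  stmt12_general A b xstar hstar prob hprob hsum S hE hMpsd xk pkm1 horth
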